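/- arXiv:2411.05402 — 5 statements merged into one kernel-verified Lean document; each statement's English description precedes it below -/
import Mathlib

section
/- Let a₁, a₂ be fermionic annihilation operators with Majorana operators c₁, c₂, c₃, c₄, let v be a vacuum vector and w := a₁ᴴ.mulVec (a₂ᴴ.mulVec v). Then the braiding operator Θ₁₂ := (1/√2) • (1 - c₁*c₂) acts diagonally on the logical basis with eigenvalues e^{∓iπ/4}: Θ₁₂.mulVec v = ((1 - i)/√2) • v and Θ₁₂.mulVec w = ((1 + i)/√2) • w; hence braiding the twists carrying c₁ and c₂ implements a logical Z rotation by π/2 (the phase gate up to an overall phase) on the code space. -/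
open Matrix Complex

/-- braiding twists 1 and 2 acts diagonally on the logical basis
with eigenvalues `e^{∓iπ/4}`, i.e. it implements a logical Z rotation by π/2
(the phase gate up to an overall phase). -/
theorem braid_12_phase_gate {N : ℕ} (a₁ a₂ : Matrix (Fin N) (Fin N) ℂ)
    (h11 : a₁ * a₁ + a₁ * a₁ = 0)
    (h22 : a₂ * a₂ + a₂ * a₂ = 0)
    (h12 : a₁ * a₂ + a₂ * a₁ = 0)
    (h12d : a₁ * a₂ᴴ + a₂ᴴ * a₁ = 0)
    (h21d : a₂ * a₁ᴴ + a₁ᴴ * a₂ = 0)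
    (h1n : a₁ * a₁ᴴ + a₁ᴴ * a₁ = 1)
    (h2n : a₂ * a₂ᴴ + a₂ᴴ * a₂ = 1)
    (c₁ c₂ c₃ c₄ Θ₁₂ : Matrix (Fin N) (Fin N) ℂ)
    (hc₁ : c₁ = a₁ + a₁ᴴ)
    (hc₂ : c₂ = (-I) • (a₁ - a₁ᴴ))
    (hc₃ : c₃ = a₂ + a₂ᴴ)
    (hc₄ : c₄ = (-I) • (a₂ - a₂ᴴ))
    (hΘ : Θ₁₂ = ((1 / Real.sqrt 2 : ℝ) : ℂ) • ((1 : Matrix (Fin N) (Fin N) ℂ) - c₁ * c₂))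
    (v w : Fin N → ℂ)
    (hv₁ : a₁.mulVec v = 0)
    (hv₂ : a₂.mulVec v = 0)
    (hw : w = a₁ᴴ.mulVec (a₂ᴴ.mulVec v)) :
    Θ₁₂.mulVec v = ((1 - I) / (Real.sqrt 2 : ℂ)) • v ∧
    Θ₁₂.mulVec w = ((1 + I) / (Real.sqrt 2 : ℂ)) • w := by

  have ha1 : a₁ * a₁ = 0 := by
    have h : (2:ℂ) • (a₁ * a₁) = 0 := by rw [two_smul]; exact h11
    simpa [two_ne_zero] using h
  have ha1d : a₁ᴴ * a₁ᴴ = 0 := by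
    have h := congrArg conjTranspose ha1
    simpa [conjTranspose_mul] using h
  have h1 : a₁ * a₁ᴴ = 1 - a₁ᴴ * a₁ := eq_sub_of_add_eq h1n
  have h12d' : a₁ * a₂ᴴ = -(a₂ᴴ * a₁) := eq_neg_of_add_eq_zero_left h12d
  have hcc : c₁ * c₂ = I • (1 : Matrix (Fin N) (Fin N) ℂ) - (2 * I) • (a₁ᴴ * a₁) := by
    rw [hc₁, hc₂, Matrix.mul_smul, add_mul, mul_sub, mul_sub, ha1, ha1d, h1]
    module
  have haw : a₁.mulVec w = a₂ᴴ.mulVec v := by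
    have hzero : a₁.mulVec (a₂ᴴ.mulVec v) = 0 := by
      rw [mulVec_mulVec, h12d', Matrix.neg_mulVec, ← mulVec_mulVec, hv₁,
        Matrix.mulVec_zero, neg_zero]
    have hz2 : (a₁ᴴ * a₁ * a₂ᴴ).mulVec v = 0 := by
      rw [mul_assoc, ← mulVec_mulVec, ← mulVec_mulVec, hzero, Matrix.mulVec_zero]
    rw [hw, mulVec_mulVec, mulVec_mulVec, h1, sub_mul, one_mul, Matrix.sub_mulVec,
      hz2, sub_zero]
  have hAw : (a₁ᴴ * a₁).mulVec w = w := by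
    rw [← mulVec_mulVec, haw, ← hw]
  have hAv : (a₁ᴴ * a₁).mulVec v = 0 := by
    rw [← mulVec_mulVec, hv₁, Matrix.mulVec_zero]
  have hs : ((1 / Real.sqrt 2 : ℝ) : ℂ) = 1 / (Real.sqrt 2 : ℂ) := by push_cast; ring
  constructor
  · rw [hΘ, Matrix.smul_mulVec, Matrix.sub_mulVec, Matrix.one_mulVec, hcc,
      Matrix.sub_mulVec, Matrix.smul_mulVec, Matrix.smul_mulVec,
      Matrix.one_mulVec, hAv, smul_zero, sub_zero, hs]
    rw [show v - I • v = (1 - I) • v by module, smul_smul]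
    congr 1
    ring
  · rw [hΘ, Matrix.smul_mulVec, Matrix.sub_mulVec, Matrix.one_mulVec, hcc,
      Matrix.sub_mulVec, Matrix.smul_mulVec, Matrix.smul_mulVec,
      Matrix.one_mulVec, hAw, hs]
    rw [show w - (I • w - (2 * I) • w) = (1 + I) • w by module, smul_smul]
    congr 1
    ring
end

section
/- Let a₁, a₂ be fermionic annihilation operators with Majorana operators c₁, c₂, c₃, c₄, let v be a vacuum vector and w := a₁ᴴ.mulVec (a₂ᴴ.mulVec v). Then the braiding operator Θ₁₃ := (1/√2) • (1 - c₁*c₃) acts on the logical basis as an equal-weight rotation mixing the two basis vectors: Θ₁₃.mulVec v = (1/√2) • (v - w) and Θ₁₃.mulVec w = (1/√2) • (v + w); hence braiding the twists carrying c₁ and c₃ implements a π/2 rotation about a logical axis orthogonal to Z on the code space. -/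
open Matrix Complex

/-- braiding twists 1 and 3 mixes the two logical basis vectors
with equal weight, implementing a π/2 rotation about a logical axis
orthogonal to Z. -/
theorem braid_13_rotation {N : ℕ} (a₁ a₂ : Matrix (Fin N) (Fin N) ℂ)
    (h11 : a₁ * a₁ + a₁ * a₁ = 0)
    (h22 : a₂ * a₂ + a₂ * a₂ = 0)
    (h12 : a₁ * a₂ + a₂ * a₁ = 0)
    (h12d : a₁ * a₂ᴴ + a₂ᴴ * a₁ = 0)
    (h21d : a₂ * a₁ᴴ + a₁ᴴ * a₂ = 0)
    (h1n : a₁ * a₁ᴴ + a₁ᴴ * a₁ = 1)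
    (h2n : a₂ * a₂ᴴ + a₂ᴴ * a₂ = 1)
    (c₁ c₂ c₃ c₄ Θ₁₃ : Matrix (Fin N) (Fin N) ℂ)
    (hc₁ : c₁ = a₁ + a₁ᴴ)
    (hc₂ : c₂ = (-I) • (a₁ - a₁ᴴ))
    (hc₃ : c₃ = a₂ + a₂ᴴ)
    (hc₄ : c₄ = (-I) • (a₂ - a₂ᴴ))
    (hΘ : Θ₁₃ = ((1 / Real.sqrt 2 : ℝ) : ℂ) • ((1 : Matrix (Fin N) (Fin N) ℂ) - c₁ * c₃))
    (v w : Fin N → ℂ)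
    (hv₁ : a₁.mulVec v = 0)
    (hv₂ : a₂.mulVec v = 0)
    (hw : w = a₁ᴴ.mulVec (a₂ᴴ.mulVec v)) :
    Θ₁₃.mulVec v = ((1 / Real.sqrt 2 : ℝ) : ℂ) • (v - w) ∧
    Θ₁₃.mulVec w = ((1 / Real.sqrt 2 : ℝ) : ℂ) • (v + w) := by
  -- basic vector facts
  have key1 : (c₁ * c₃).mulVec v = w := by
    have h1 : (a₁ * a₂ᴴ).mulVec v = 0 := by
      have : a₁ * a₂ᴴ = -(a₂ᴴ * a₁) := eq_neg_of_add_eq_zero_left h12d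
      rw [this, Matrix.neg_mulVec, ← Matrix.mulVec_mulVec, hv₁, Matrix.mulVec_zero, neg_zero]
    have h2 : (a₁ * a₂).mulVec v = 0 := by
      rw [← Matrix.mulVec_mulVec, hv₂, Matrix.mulVec_zero]
    have h3 : (a₁ᴴ * a₂).mulVec v = 0 := by
      rw [← Matrix.mulVec_mulVec, hv₂, Matrix.mulVec_zero]
    rw [hc₁, hc₃, hw, Matrix.mulVec_mulVec, add_mul, mul_add, mul_add,
      Matrix.add_mulVec, Matrix.add_mulVec, Matrix.add_mulVec, h1, h2, h3]
    simp
  have key2 : (c₁ * c₃).mulVec w = -v := by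
    -- adjoint relations
    have h12' : a₁ᴴ * a₂ᴴ + a₂ᴴ * a₁ᴴ = 0 := by
      have := congrArg Matrix.conjTranspose h12
      simpa [Matrix.conjTranspose_add, Matrix.conjTranspose_mul, add_comm] using this
    have h22' : a₂ᴴ * a₂ᴴ = 0 := by
      have := congrArg Matrix.conjTranspose h22
      simp only [Matrix.conjTranspose_add, Matrix.conjTranspose_mul,
        Matrix.conjTranspose_zero] at this
      have h2 : (2 : ℂ) • (a₂ᴴ * a₂ᴴ) = 0 := by
        rw [two_smul]; exact this
      simpa using (smul_eq_zero.mp h2).resolve_left (by norm_num)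
    have h11' : a₁ᴴ * a₁ᴴ = 0 := by
      have := congrArg Matrix.conjTranspose h11
      simp only [Matrix.conjTranspose_add, Matrix.conjTranspose_mul,
        Matrix.conjTranspose_zero] at this
      have h2 : (2 : ℂ) • (a₁ᴴ * a₁ᴴ) = 0 := by
        rw [two_smul]; exact this
      simpa using (smul_eq_zero.mp h2).resolve_left (by norm_num)
    -- c₃ w = -a₁ᴴ v
    have hc3w : c₃.mulVec w = -(a₁ᴴ.mulVec v) := by
      have e1 : a₂ * (a₁ᴴ * a₂ᴴ) = -(a₁ᴴ * (a₂ * a₂ᴴ)) := by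
        have : a₂ * a₁ᴴ = -(a₁ᴴ * a₂) := eq_neg_of_add_eq_zero_left h21d
        rw [← mul_assoc, this]; noncomm_ring
      have e2 : (a₂ * (a₁ᴴ * a₂ᴴ)).mulVec v = -(a₁ᴴ.mulVec v) := by
        rw [e1, Matrix.neg_mulVec, ← Matrix.mulVec_mulVec]
        have : (a₂ * a₂ᴴ).mulVec v = v := by
          have : a₂ * a₂ᴴ = 1 - a₂ᴴ * a₂ := eq_sub_of_add_eq h2n
          rw [this, Matrix.sub_mulVec, Matrix.one_mulVec, ← Matrix.mulVec_mulVec, hv₂,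
            Matrix.mulVec_zero, sub_zero]
        rw [this]
      have e3 : (a₂ᴴ * (a₁ᴴ * a₂ᴴ)).mulVec v = 0 := by
        have : a₂ᴴ * (a₁ᴴ * a₂ᴴ) = -(a₂ᴴ * a₂ᴴ * a₁ᴴ) := by
          have h' : a₁ᴴ * a₂ᴴ = -(a₂ᴴ * a₁ᴴ) := eq_neg_of_add_eq_zero_left h12'
          rw [h']; noncomm_ring
        rw [this, h22']; simp [Matrix.neg_mulVec]
      have expand : (a₂ + a₂ᴴ) * a₁ᴴ * a₂ᴴ
          = a₂ * (a₁ᴴ * a₂ᴴ) + a₂ᴴ * (a₁ᴴ * a₂ᴴ) := by noncomm_ring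
      rw [hc₃, hw, Matrix.mulVec_mulVec, Matrix.mulVec_mulVec, expand,
        Matrix.add_mulVec, e2, e3, add_zero]
    have : (c₁ * c₃).mulVec w = c₁.mulVec (c₃.mulVec w) := by
      rw [Matrix.mulVec_mulVec]
    rw [this, hc3w, Matrix.mulVec_neg, hc₁, Matrix.add_mulVec]
    have h1 : a₁.mulVec (a₁ᴴ.mulVec v) = v := by
      rw [Matrix.mulVec_mulVec]
      have : a₁ * a₁ᴴ = 1 - a₁ᴴ * a₁ := eq_sub_of_add_eq h1n
      rw [this, Matrix.sub_mulVec, Matrix.one_mulVec, ← Matrix.mulVec_mulVec, hv₁,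
        Matrix.mulVec_zero, sub_zero]
    have h2 : a₁ᴴ.mulVec (a₁ᴴ.mulVec v) = 0 := by
      rw [Matrix.mulVec_mulVec, h11', Matrix.zero_mulVec]
    rw [h1, h2, add_zero]
  constructor
  · rw [hΘ, Matrix.smul_mulVec, Matrix.sub_mulVec, Matrix.one_mulVec, key1]
  · rw [hΘ, Matrix.smul_mulVec, Matrix.sub_mulVec, Matrix.one_mulVec, key2,
      sub_neg_eq_add, add_comm]
end

section
/- Let a₁, a₂, a₃ be three fermionic annihilation operators satisfying the canonical anticommutation relations, let v be a vacuum vector (aⱼ.mulVec v = 0 for j = 1,2,3), and define the logical basis vectors |000⟩ = v, |011⟩ = a₂ᴴ.mulVec (a₃ᴴ.mulVec v), |110⟩ = a₁ᴴ.mulVec (a₂ᴴ.mulVec v), |101⟩ = a₁ᴴ.mulVec (a₃ᴴ.mulVec v). Let c₃ = a₂ + a₂ᴴ and c₄ = (-i)•(a₂ - a₂ᴴ) be the Majorana operators of mode 2, and let Θ₃₄ := (1/√2) • (1 - c₃*c₄). Then Θ₃₄ acts diagonally on the logical basis: Θ₃₄.mulVec |000⟩ = ((1-i)/√2) • |000⟩,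 Θ₃₄.mulVec |011⟩ = ((1+i)/√2) • |011⟩, Θ₃₄.mulVec |110⟩ = ((1+i)/√2) • |110⟩, and Θ₃₄.mulVec |101⟩ = ((1-i)/√2) • |101⟩; i.e., up to an overall phase it acts as the entangling gate exp(-i(π/4) Z̄₁Z̄₂) = diag(1, i, i, 1) on the two encoded qubits. -/
open Matrix Complex

/-- braiding twists 3 and 4 (the Majorana modes of fermionic
mode 2) acts diagonally on the four logical basis states of three fermionic
modes, with phases `e^{-iπ/4}, e^{iπ/4}, e^{iπ/4}, e^{-iπ/4}`; i.e. up to an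
overall phase it is the entangling gate `diag(1, i, i, 1)`. -/
theorem braid_34_entangling_gate {N : ℕ} (a₁ a₂ a₃ : Matrix (Fin N) (Fin N) ℂ)
    (h11 : a₁ * a₁ + a₁ * a₁ = 0)
    (h22 : a₂ * a₂ + a₂ * a₂ = 0)
    (h33 : a₃ * a₃ + a₃ * a₃ = 0)
    (h12 : a₁ * a₂ + a₂ * a₁ = 0)
    (h13 : a₁ * a₃ + a₃ * a₁ = 0)
    (h23 : a₂ * a₃ + a₃ * a₂ = 0)
    (h12d : a₁ * a₂ᴴ + a₂ᴴ * a₁ = 0)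
    (h21d : a₂ * a₁ᴴ + a₁ᴴ * a₂ = 0)
    (h13d : a₁ * a₃ᴴ + a₃ᴴ * a₁ = 0)
    (h31d : a₃ * a₁ᴴ + a₁ᴴ * a₃ = 0)
    (h23d : a₂ * a₃ᴴ + a₃ᴴ * a₂ = 0)
    (h32d : a₃ * a₂ᴴ + a₂ᴴ * a₃ = 0)
    (h1n : a₁ * a₁ᴴ + a₁ᴴ * a₁ = 1)
    (h2n : a₂ * a₂ᴴ + a₂ᴴ * a₂ = 1)
    (h3n : a₃ * a₃ᴴ + a₃ᴴ * a₃ = 1)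
    (c₃ c₄ Θ₃₄ : Matrix (Fin N) (Fin N) ℂ)
    (hc₃ : c₃ = a₂ + a₂ᴴ)
    (hc₄ : c₄ = (-I) • (a₂ - a₂ᴴ))
    (hΘ : Θ₃₄ = ((1 / Real.sqrt 2 : ℝ) : ℂ) • ((1 : Matrix (Fin N) (Fin N) ℂ) - c₃ * c₄))
    (v v000 v011 v110 v101 : Fin N → ℂ)
    (hv₁ : a₁.mulVec v = 0)
    (hv₂ : a₂.mulVec v = 0)
    (hv₃ : a₃.mulVec v = 0)
    (h000 : v000 = v)
    (h011 : v011 = a₂ᴴ.mulVec (a₃ᴴ.mulVec v))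
    (h110 : v110 = a₁ᴴ.mulVec (a₂ᴴ.mulVec v))
    (h101 : v101 = a₁ᴴ.mulVec (a₃ᴴ.mulVec v)) :
    Θ₃₄.mulVec v000 = ((1 - I) / (Real.sqrt 2 : ℂ)) • v000 ∧
    Θ₃₄.mulVec v011 = ((1 + I) / (Real.sqrt 2 : ℂ)) • v011 ∧
    Θ₃₄.mulVec v110 = ((1 + I) / (Real.sqrt 2 : ℂ)) • v110 ∧
    Θ₃₄.mulVec v101 = ((1 - I) / (Real.sqrt 2 : ℂ)) • v101 := by
  -- basic consequences of CAR for mode 2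
  have ha2 : a₂ * a₂ = 0 := by
    have h2 : (2 : ℂ) • (a₂ * a₂) = 0 := by rw [two_smul]; exact h22
    exact (smul_eq_zero.mp h2).resolve_left two_ne_zero
  have had : a₂ᴴ * a₂ᴴ = 0 := by
    have := congrArg Matrix.conjTranspose ha2
    simpa [Matrix.conjTranspose_mul] using this
  have hn : a₂ * a₂ᴴ = 1 - a₂ᴴ * a₂ := by
    rw [eq_sub_iff_add_eq]; exact h2n
  have h12dd : a₂ᴴ * a₁ᴴ = -(a₁ᴴ * a₂ᴴ) := by
    have := congrArg Matrix.conjTranspose h12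
    simp only [Matrix.conjTranspose_add, Matrix.conjTranspose_mul,
      Matrix.conjTranspose_zero] at this
    exact eq_neg_of_add_eq_zero_left this
  have hkey : c₃ * c₄ = I • (1 : Matrix (Fin N) (Fin N) ℂ) - (2 * I) • (a₂ᴴ * a₂) := by
    have expand : (a₂ + a₂ᴴ) * (a₂ - a₂ᴴ) = (2 : ℂ) • (a₂ᴴ * a₂) - 1 := by
      rw [add_mul, mul_sub, mul_sub, ha2, had, hn]
      module
    rw [hc₃, hc₄, mul_smul_comm, expand]
    module
  have sqrt2_ne : ((Real.sqrt 2 : ℝ) : ℂ) ≠ 0 := by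
    exact_mod_cast Real.sqrt_ne_zero'.mpr (by norm_num)
  have key : ∀ (w : Fin N → ℂ) (μ : ℂ), (a₂ᴴ * a₂).mulVec w = μ • w →
      Θ₃₄.mulVec w = (((1 - I) + 2 * I * μ) / (Real.sqrt 2 : ℂ)) • w := by
    intro w μ hw
    rw [hΘ, hkey]
    rw [Matrix.smul_mulVec, Matrix.sub_mulVec, Matrix.sub_mulVec,
      Matrix.smul_mulVec, Matrix.smul_mulVec, Matrix.one_mulVec, hw]
    push_cast
    match_scalars
    field_simp
    ring
  have hμ000 : (a₂ᴴ * a₂).mulVec v = (0 : ℂ) • v := by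
    rw [← Matrix.mulVec_mulVec, hv₂, Matrix.mulVec_zero, zero_smul]
  have hstep : ∀ w, a₂.mulVec (a₂ᴴ.mulVec w) = w - a₂ᴴ.mulVec (a₂.mulVec w) := by
    intro w
    rw [Matrix.mulVec_mulVec, hn, Matrix.sub_mulVec, Matrix.one_mulVec,
      Matrix.mulVec_mulVec]
  have ha23 : a₂.mulVec (a₃ᴴ.mulVec v) = 0 := by
    have hm : a₂ * a₃ᴴ = -(a₃ᴴ * a₂) := by
      rw [eq_neg_iff_add_eq_zero]; exact h23d
    rw [Matrix.mulVec_mulVec, hm, Matrix.neg_mulVec, ← Matrix.mulVec_mulVec,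
      hv₂, Matrix.mulVec_zero, neg_zero]
  have ha21 : a₂ * a₁ᴴ = -(a₁ᴴ * a₂) := by
    rw [eq_neg_iff_add_eq_zero]; exact h21d
  have hswap21 : ∀ w, a₂.mulVec (a₁ᴴ.mulVec w) = -(a₁ᴴ.mulVec (a₂.mulVec w)) := by
    intro w
    rw [Matrix.mulVec_mulVec, ha21, Matrix.neg_mulVec, Matrix.mulVec_mulVec]
  have hswapd : ∀ w, a₂ᴴ.mulVec (a₁ᴴ.mulVec w) = -(a₁ᴴ.mulVec (a₂ᴴ.mulVec w)) := by
    intro w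
    rw [Matrix.mulVec_mulVec, h12dd, Matrix.neg_mulVec, Matrix.mulVec_mulVec]
  have hμ011 : (a₂ᴴ * a₂).mulVec v011 = (1 : ℂ) • v011 := by
    rw [h011, one_smul, ← Matrix.mulVec_mulVec, hstep, ha23,
      Matrix.mulVec_zero, sub_zero]
  have hμ110 : (a₂ᴴ * a₂).mulVec v110 = (1 : ℂ) • v110 := by
    rw [h110, one_smul, ← Matrix.mulVec_mulVec, hswap21, hstep, hv₂,
      Matrix.mulVec_zero, sub_zero, Matrix.mulVec_neg, hswapd, neg_neg]
  have hμ101 : (a₂ᴴ * a₂).mulVec v101 = (0 : ℂ) • v101 := by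
    rw [h101, zero_smul, ← Matrix.mulVec_mulVec, hswap21, ha23,
      Matrix.mulVec_zero, neg_zero, Matrix.mulVec_zero]
  refine ⟨?_, ?_, ?_, ?_⟩
  · rw [h000] at *
    rw [key v 0 hμ000]; ring_nf
  · rw [key v011 1 hμ011]; ring_nf
  · rw [key v110 1 hμ110]; ring_nf
  · rw [key v101 0 hμ101]; ring_nf
end

section
/- Let U = exp((-(π/4)·i : ℂ) • (Z ⊗ₖ Z)) be the two-qubit entangling braiding unitary. Then conjugation by U implements the logical transformation Z̄₁ → Z̄₁, Z̄₂ → Z̄₂, X̄₁ → Ȳ₁Z̄₂, X̄₂ → Z̄₁Ȳ₂; explicitly: U * (Z ⊗ₖ 1) = (Z ⊗ₖ 1) * U, U * (1 ⊗ₖ Z) = (1 ⊗ₖ Z) * U, U * (X ⊗ₖ 1) = (Y ⊗ₖ Z) * U, and U * (1 ⊗ₖ X) = (Z ⊗ₖ Y) * U. -/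
/-!
Since `P = Z ⊗ Z` squares to the identity, `U = exp(-(π/4) i P) = cosh c + sinh c • P` with
`c = -(π/4) i`. The operators `Z ⊗ 1` and `1 ⊗ Z` commute with `P`, hence with `U`. The operators
`X ⊗ 1` and `1 ⊗ X` anticommute with `P`, and `Y ⊗ Z`, `Z ⊗ Y` are `i (X ⊗ 1) P`, `i (1 ⊗ X) P`;
for such an operator `A` the relation `U A = i A P U` reduces to `cosh c = i sinh c`, which is
`cos (π/4) = sin (π/4)`.
-/

open Matrix Complex Kronecker

theorem NormedSpace.exp_smul_of_mul_self_eq_one {A : Type*} [Ring A] [Algebra ℂ A]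
    [TopologicalSpace A] [IsTopologicalRing A] [ContinuousSMul ℂ A] [T2Space A]
    {P : A} (hP : P * P = 1) (z : ℂ) :
    NormedSpace.exp (z • P) = cosh z • (1 : A) + sinh z • P := by
  have hpow (n : ℕ) : P ^ (2 * n) = 1 := by rw [pow_mul, sq, hP, one_pow]
  rw [NormedSpace.exp_eq_tsum ℂ]
  refine HasSum.tsum_eq (HasSum.even_add_odd ?_ ?_)
  · convert (Complex.hasSum_cosh z).smul_const (1 : A) using 2 with n
    rw [smul_pow, hpow, smul_smul, div_eq_inv_mul]
  · convert (Complex.hasSum_sinh z).smul_const P using 2 with n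
    rw [smul_pow, pow_succ P, hpow, one_mul, smul_smul, div_eq_inv_mul]

theorem smul_one_add_smul_mul_of_anticommute {R : Type*} [Ring R] [Algebra ℂ R] {P A : R}
    (hP : P * P = 1) (hAP : A * P = -(P * A)) {a b : ℂ} (hab : a = I * b) :
    (a • 1 + b • P) * A = (I • (A * P)) * (a • 1 + b • P) := by
  subst hab
  simp only [add_mul, mul_add, smul_mul_assoc, mul_smul_comm, one_mul, mul_one, smul_smul,
    mul_assoc, hP]
  rw [hAP, show I * (b * I) = -b by linear_combination b * I_mul_I, mul_comm b I]
  module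

section Kronecker

variable {α m n : Type*} [CommRing α] [Fintype m] [Fintype n]
  {A B : Matrix m m α} {C D : Matrix n n α}

theorem Commute.kronecker (hAB : Commute A B) (hCD : Commute C D) :
    Commute (A ⊗ₖ C) (B ⊗ₖ D) := by
  rw [Commute, SemiconjBy, ← mul_kronecker_mul, ← mul_kronecker_mul, hAB.eq, hCD.eq]

theorem kronecker_mul_kronecker_of_anticommute_left (hAB : A * B = -(B * A))
    (hCD : Commute C D) : A ⊗ₖ C * B ⊗ₖ D = -(B ⊗ₖ D * A ⊗ₖ C) := by
  rw [← mul_kronecker_mul, ← mul_kronecker_mul, hAB, hCD.eq, ← neg_one_smul α (B * A),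
    smul_kronecker, neg_one_smul]

theorem kronecker_mul_kronecker_of_anticommute_right (hAB : Commute A B)
    (hCD : C * D = -(D * C)) : A ⊗ₖ C * B ⊗ₖ D = -(B ⊗ₖ D * A ⊗ₖ C) := by
  rw [← mul_kronecker_mul, ← mul_kronecker_mul, hAB.eq, hCD, ← neg_one_smul α (D * C),
    kronecker_smul, neg_one_smul]

end Kronecker

section Pauli

variable {α : Type*} [Ring α]

theorem pauliZ_mul_self : (!![1, 0; 0, -1] : Matrix (Fin 2) (Fin 2) α) * !![1, 0; 0, -1] = 1 := by
  simp [one_fin_two]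

theorem pauliX_mul_pauliZ :
    (!![0, 1; 1, 0] : Matrix (Fin 2) (Fin 2) α) * !![1, 0; 0, -1] =
      -(!![1, 0; 0, -1] * !![0, 1; 1, 0]) := by
  simp

theorem pauliY_eq_I_smul_pauliX_mul_pauliZ :
    (!![0, -I; I, 0] : Matrix (Fin 2) (Fin 2) ℂ) = I • (!![0, 1; 1, 0] * !![1, 0; 0, -1]) := by
  simp

end Pauli

theorem entangling_braid_logical_action_general
    (X Y Z : Matrix (Fin 2) (Fin 2) ℂ)
    (hX : X = !![0, 1; 1, 0])
    (hY : Y = !![0, -I; I, 0])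
    (hZ : Z = !![1, 0; 0, -1])
    (Ubig : Matrix (Fin 2 × Fin 2) (Fin 2 × Fin 2) ℂ)
    (hU : Ubig = NormedSpace.exp (((-(Real.pi / 4 : ℝ) : ℂ) * I) • (Z ⊗ₖ Z))) :
    Ubig * (Z ⊗ₖ (1 : Matrix (Fin 2) (Fin 2) ℂ)) = (Z ⊗ₖ (1 : Matrix (Fin 2) (Fin 2) ℂ)) * Ubig ∧
    Ubig * ((1 : Matrix (Fin 2) (Fin 2) ℂ) ⊗ₖ Z) = ((1 : Matrix (Fin 2) (Fin 2) ℂ) ⊗ₖ Z) * Ubig ∧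
    Ubig * (X ⊗ₖ (1 : Matrix (Fin 2) (Fin 2) ℂ)) = (Y ⊗ₖ Z) * Ubig ∧
    Ubig * ((1 : Matrix (Fin 2) (Fin 2) ℂ) ⊗ₖ X) = (Z ⊗ₖ Y) * Ubig := by
  set c : ℂ := (-(Real.pi / 4 : ℝ) : ℂ) * I
  have hZZ : Z * Z = 1 := hZ ▸ pauliZ_mul_self
  have hXZ : X * Z = -(Z * X) := hX ▸ hZ ▸ pauliX_mul_pauliZ
  have hYXZ : Y = I • (X * Z) := hX ▸ hY ▸ hZ ▸ pauliY_eq_I_smul_pauliX_mul_pauliZ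
  have hP : Z ⊗ₖ Z * Z ⊗ₖ Z = 1 := by rw [← mul_kronecker_mul, hZZ, one_kronecker_one]
  have hUcs : Ubig = cosh c • 1 + sinh c • Z ⊗ₖ Z :=
    hU.trans (NormedSpace.exp_smul_of_mul_self_eq_one hP c)
  have hcs : cosh c = I * sinh c := by
    rw [cosh_mul_I, sinh_mul_I, ← mul_assoc, mul_comm I, mul_assoc, I_mul_I, mul_neg_one,
      cos_neg, sin_neg, neg_neg, ← ofReal_cos, ← ofReal_sin, Real.cos_pi_div_four,
      Real.sin_pi_div_four]
  refine ⟨?_, ?_, ?_, ?_⟩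
  · rw [hU]
    exact (((Commute.refl Z).kronecker (Commute.one_right Z)).smul_left c).exp_left.eq
  · rw [hU]
    exact (((Commute.one_right Z).kronecker (Commute.refl Z)).smul_left c).exp_left.eq
  · have hXP : (X * Z) ⊗ₖ Z = X ⊗ₖ 1 * Z ⊗ₖ Z := by rw [← mul_kronecker_mul, one_mul]
    rw [hUcs, hYXZ, smul_kronecker, hXP]
    exact smul_one_add_smul_mul_of_anticommute hP
      (kronecker_mul_kronecker_of_anticommute_left hXZ (Commute.one_left Z)) hcs
  · have hXP : Z ⊗ₖ (X * Z) = 1 ⊗ₖ X * Z ⊗ₖ Z := by rw [← mul_kronecker_mul, one_mul]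
    rw [hUcs, hYXZ, kronecker_smul, hXP]
    exact smul_one_add_smul_mul_of_anticommute hP
      (kronecker_mul_kronecker_of_anticommute_right (Commute.one_left Z) hXZ) hcs

/-- conjugation by the entangling braiding unitary
`U = exp(-i(π/4) Z ⊗ Z)` implements the logical transformation
`Z̄₁ → Z̄₁`, `Z̄₂ → Z̄₂`, `X̄₁ → Ȳ₁Z̄₂`, `X̄₂ → Z̄₁Ȳ₂`. -/
theorem entangling_braid_logical_action
    (X Y Z U : Matrix (Fin 2) (Fin 2) ℂ)
    (hX : X = !![0, 1; 1, 0])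
    (hY : Y = !![0, -I; I, 0])
    (hZ : Z = !![1, 0; 0, -1])
    (Ubig : Matrix (Fin 2 × Fin 2) (Fin 2 × Fin 2) ℂ)
    (hU : Ubig = NormedSpace.exp (((-(Real.pi / 4 : ℝ) : ℂ) * I) • (Z ⊗ₖ Z))) :
    Ubig * (Z ⊗ₖ (1 : Matrix (Fin 2) (Fin 2) ℂ)) = (Z ⊗ₖ (1 : Matrix (Fin 2) (Fin 2) ℂ)) * Ubig ∧
    Ubig * ((1 : Matrix (Fin 2) (Fin 2) ℂ) ⊗ₖ Z) = ((1 : Matrix (Fin 2) (Fin 2) ℂ) ⊗ₖ Z) * Ubig ∧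
    Ubig * (X ⊗ₖ (1 : Matrix (Fin 2) (Fin 2) ℂ)) = (Y ⊗ₖ Z) * Ubig ∧
    Ubig * ((1 : Matrix (Fin 2) (Fin 2) ℂ) ⊗ₖ X) = (Z ⊗ₖ Y) * Ubig :=
  entangling_braid_logical_action_general X Y Z hX hY hZ Ubig hU
end

section
/- Counting argument for the number of encoded qubits in a 2-colex with domino twists: let n, e, f, τ, ℓ be rational numbers (the numbers of vertices, edges, faces, twist pairs, and the length of the virtual path) satisfying the Euler relation n + f - e = 2 and the degree-count relation 2e = 3(n - τ(ℓ - 1)) + 2τ(ℓ - 1). Then f = n/2 - (τ/2)(ℓ - 1) + 2, the number of independent stabilizers s := 2(f - τ) + τℓ - 3 equals n - τ + 1, and hence the number of encoded qubits k := n - s equals τ - 1 = t/2 - 1 where t = 2τ is the number of twists. -/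
/-- counting argument for the number of encoded qubits in a
2-colex with domino twists. From Euler's formula and the degree count, the
number of faces is `f = n/2 - (τ/2)(ℓ-1) + 2`, the number of independent
stabilizers `s = 2(f - τ) + τℓ - 3` equals `n - τ + 1`, and the number of
encoded qubits `k = n - s` equals `τ - 1 = t/2 - 1` with `t = 2τ`. -/
theorem encoded_qubits_count (n e f τ ℓ s k t : ℚ)
    (euler : n + f - e = 2)
    (degree : 2 * e = 3 * (n - τ * (ℓ - 1)) + 2 * (τ * (ℓ - 1)))
    (hs : s = 2 * (f - τ) + τ * ℓ - 3)
    (hk : k = n - s)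
    (ht : t = 2 * τ) :
    f = n / 2 - (τ / 2) * (ℓ - 1) + 2 ∧ s = n - τ + 1 ∧ k = τ - 1 ∧ k = t / 2 - 1 := by
  refine ⟨by linarith, by linarith, by linarith, by linarith⟩
end
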